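/- Let a_1 ≥ 0, a_2, …, a_{2m} ≥ 1 and c_1 ≥ 1, c_2, …, c_k ≥ 2 be integers such that the classical continued fraction values coincide in ℚ: [a_1,…,a_{2m}] = [[c_1,…,c_k]]. Then the left q-deformed rational number defined via the σ-action on 1/(1 − q) admits the negative-continued-fraction matrix expression: σ_{1,q}^{−a_1}σ_{2,q}^{a_2}σ_{1,q}^{−a_3}σ_{2,q}^{a_4}⋯σ_{1,q}^{−a_{2m−1}}σ_{2,q}^{a_{2m}}(1/(1 − q)) = σ_{1,q}^{−c_1}S_q·σ_{1,q}^{−c_2}S_q·⋯·σ_{1,q}^{−c_k}S_q(1/(1 − q)), where both sides denote Möbius actions on the element 1/(1 − q) of ℚ(q). -/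

import Mathlib

noncomputable section

/-- The field ℚ(q) of rational functions over ℚ. -/
abbrev K : Type := RatFunc ℚ

/-- The variable q. -/
def q : K := RatFunc.X

/-- Right q-integer `[n]^♯` with deformation parameter `x`. -/
def qsX (x : K) (n : ℤ) : K := (1 - x ^ n) / (1 - x)

/-- Left q-integer `[n]^♭` with deformation parameter `x`. -/
def qfX (x : K) (n : ℤ) : K := (1 - x ^ (n - 1) + x ^ n - x ^ (n + 1)) / (1 - x)

/-- Right q-integer `[n]^♯_q`. -/
def qs (n : ℤ) : K := qsX q n

/-- Left q-integer `[n]^♭_q`. -/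
def qf (n : ℤ) : K := qfX q n

/-- Right q-deformed Euler continuant `E^♯` (first-row expansion of the
tridiagonal determinant), with parameter `x`. -/
def EsharpX (x : K) : List ℤ → K
  | [] => 1
  | [c] => qsX x c
  | c :: d :: rest => qsX x c * EsharpX x (d :: rest) - x ^ (c - 1) * EsharpX x rest

/-- Left q-deformed Euler continuant `E^♭` (first-row expansion of the
tridiagonal determinant whose (k,k) entry is the left q-integer), with parameter `x`. -/
def EflatX (x : K) : List ℤ → K
  | [] => 1
  | [c] => qfX x c
  | c :: d :: rest => qsX x c * EflatX x (d :: rest) - x ^ (c - 1) * EflatX x rest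

def Esharp (L : List ℤ) : K := EsharpX q L

def Eflat (L : List ℤ) : K := EflatX q L

/-- `E^♯_{j-1}(d_2,…,d_j)` for the input list `(d_1,…,d_j)`, with the
convention `E^♯_{-1}() = 0` when the list is empty. -/
def EsharpD : List ℤ → K
  | [] => 0
  | _ :: rest => Esharp rest

/-- `E^♭_{j-1}(d_2,…,d_j)` for the input list `(d_1,…,d_j)`, with the
convention `E^♭_{-1}() = 1 - q` when the list is empty. -/
def EflatD : List ℤ → K
  | [] => 1 - q
  | _ :: rest => Eflat rest

/-- Left q-deformed negative continued fraction `[[c_1,…,c_k]]^♭_q`. -/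
def nflat : List ℤ → K
  | [] => 0
  | [c] => qf c
  | c :: d :: rest => qs c - q ^ (c - 1) / nflat (d :: rest)

/-- Right q-deformed negative continued fraction `[[c_1,…,c_k]]^♯_q`. -/
def nsharp : List ℤ → K
  | [] => 0
  | [c] => qs c
  | c :: d :: rest => qs c - q ^ (c - 1) / nsharp (d :: rest)

/-- Left q-deformed regular continued fraction, with alternating parameter `x`, `x⁻¹`. -/
def regFlatX : K → List ℤ → K
  | _, [] => 0
  | x, [a] => qfX x a
  | x, a :: d :: rest => qsX x a + x ^ a / regFlatX x⁻¹ (d :: rest)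

/-- Left q-deformed regular continued fraction `[a_1,…,a_{2m}]^♭_q`. -/
def regFlat (L : List ℤ) : K := regFlatX q L

/-- Classical negative continued fraction `[[c_1,…,c_k]] ∈ ℚ`. -/
def negCF : List ℤ → ℚ
  | [] => 0
  | [c] => c
  | c :: d :: rest => c - 1 / negCF (d :: rest)

/-- Classical regular continued fraction `[a_1,…,a_{2m}] ∈ ℚ`. -/
def regCF : List ℤ → ℚ
  | [] => 0
  | [a] => a
  | a :: d :: rest => a + 1 / regCF (d :: rest)

/-- The matrix σ_{1,q} as an invertible 2×2 matrix over ℚ(q). -/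
def σ1 : (Matrix (Fin 2) (Fin 2) K)ˣ where
  val := !![q⁻¹, -q⁻¹; 0, 1]
  inv := !![q, 1; 0, 1]
  val_inv := by
    have hq : (q : K) ≠ 0 := RatFunc.X_ne_zero
    ext i j
    fin_cases i <;> fin_cases j <;>
      simp [Matrix.mul_apply, Fin.sum_univ_two, inv_mul_cancel₀ hq]
  inv_val := by
    have hq : (q : K) ≠ 0 := RatFunc.X_ne_zero
    ext i j
    fin_cases i <;> fin_cases j <;>
      simp [Matrix.mul_apply, Fin.sum_univ_two, mul_inv_cancel₀ hq]

/-- The matrix σ_{2,q} as an invertible 2×2 matrix over ℚ(q). -/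
def σ2 : (Matrix (Fin 2) (Fin 2) K)ˣ where
  val := !![1, 0; 1, q⁻¹]
  inv := !![1, 0; -q, q]
  val_inv := by
    have hq : (q : K) ≠ 0 := RatFunc.X_ne_zero
    ext i j
    fin_cases i <;> fin_cases j <;>
      simp [Matrix.mul_apply, Fin.sum_univ_two, inv_mul_cancel₀ hq]
  inv_val := by
    have hq : (q : K) ≠ 0 := RatFunc.X_ne_zero
    ext i j
    fin_cases i <;> fin_cases j <;>
      simp [Matrix.mul_apply, Fin.sum_univ_two, mul_inv_cancel₀ hq]

/-- The matrix S_q as an invertible 2×2 matrix over ℚ(q). -/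
def Sq : (Matrix (Fin 2) (Fin 2) K)ˣ where
  val := !![0, -q⁻¹; 1, 0]
  inv := !![0, 1; -q, 0]
  val_inv := by
    have hq : (q : K) ≠ 0 := RatFunc.X_ne_zero
    ext i j
    fin_cases i <;> fin_cases j <;>
      simp [Matrix.mul_apply, Fin.sum_univ_two, inv_mul_cancel₀ hq]
  inv_val := by
    have hq : (q : K) ≠ 0 := RatFunc.X_ne_zero
    ext i j
    fin_cases i <;> fin_cases j <;>
      simp [Matrix.mul_apply, Fin.sum_univ_two, mul_inv_cancel₀ hq]

/-- The product σ_{1,q}^{-c_1}·S_q·σ_{1,q}^{-c_2}·S_q⋯σ_{1,q}^{-c_k}·S_q. -/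
def prodCS : List ℤ → (Matrix (Fin 2) (Fin 2) K)ˣ
  | [] => 1
  | c :: rest => σ1 ^ (-c) * Sq * prodCS rest

/-- The product σ_{1,q}^{-a_1}·σ_{2,q}^{a_2}⋯σ_{1,q}^{-a_{2m-1}}·σ_{2,q}^{a_{2m}}. -/
def prodReg : List ℤ → (Matrix (Fin 2) (Fin 2) K)ˣ
  | [] => 1
  | [a] => σ1 ^ (-a)
  | a :: b :: rest => σ1 ^ (-a) * σ2 ^ b * prodReg rest

/-- The sum a_2 + a_4 + ⋯ of the even-indexed entries. -/
def evenSum : List ℤ → ℤ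
  | [] => 0
  | [_] => 0
  | _ :: b :: rest => b + evenSum rest

/-- Möbius action of a 2×2 matrix on ℚ(q). -/
def mobius (A : Matrix (Fin 2) (Fin 2) K) (x : K) : K :=
  (A 0 0 * x + A 0 1) / (A 1 0 * x + A 1 1)

section QSide

theorem regCF_pos : ∀ l : List ℤ, (∀ x ∈ l, 1 ≤ x) → l ≠ [] → 0 < regCF l
  | [], _, hne => absurd rfl hne
  | [a], h, _ => by
      have ha : (1:ℚ) ≤ (a:ℚ) := by exact_mod_cast h a (by simp)
      simp only [regCF]; linarith
  | a :: d :: rest, h, _ => by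
      have ht : 0 < regCF (d :: rest) :=
        regCF_pos (d :: rest) (fun x hx => h x (by simp [hx])) (by simp)
      have ha : (1:ℚ) ≤ (a:ℚ) := by exact_mod_cast h a (by simp)
      have h2 : 0 < 1 / regCF (d :: rest) := by positivity
      simp only [regCF]; linarith

theorem negCF_gt_one : ∀ l : List ℤ, (∀ x ∈ l, 2 ≤ x) → l ≠ [] → 1 < negCF l
  | [], _, hne => absurd rfl hne
  | [c], h, _ => by
      have hc : (2:ℚ) ≤ (c:ℚ) := by exact_mod_cast h c (by simp)
      simp only [negCF]; linarith
  | c :: d :: rest, h, _ => by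
      have ht : 1 < negCF (d :: rest) :=
        negCF_gt_one (d :: rest) (fun x hx => h x (by simp [hx])) (by simp)
      have hc : (2:ℚ) ≤ (c:ℚ) := by exact_mod_cast h c (by simp)
      have h2 : 1 / negCF (d :: rest) < 1 := by
        rw [div_lt_one (by linarith)]; linarith
      simp only [negCF]; linarith

theorem negCF_head_bounds : ∀ (c : ℤ) (cs : List ℤ), (∀ x ∈ cs, 2 ≤ x) →
    (c:ℚ) - 1 < negCF (c :: cs) ∧ negCF (c :: cs) ≤ (c:ℚ) ∧
      (cs ≠ [] → negCF (c :: cs) < (c:ℚ))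
  | c, [], _ => by simp only [negCF]; refine ⟨by linarith, le_refl _, by tauto⟩
  | c, d :: r, h => by
      have ht : 1 < negCF (d :: r) := negCF_gt_one (d :: r) h (by simp)
      have h1 : 0 < 1 / negCF (d :: r) := by positivity
      have h2 : 1 / negCF (d :: r) < 1 := by
        rw [div_lt_one (by linarith)]; linarith
      simp only [negCF]
      exact ⟨by linarith, by linarith, fun _ => by linarith⟩

theorem negCF_inj : ∀ (cs1 : List ℤ) (c1 c2 : ℤ) (cs2 : List ℤ),
    (∀ x ∈ cs1, 2 ≤ x) → (∀ x ∈ cs2, 2 ≤ x) →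
    negCF (c1 :: cs1) = negCF (c2 :: cs2) → c1 = c2 ∧ cs1 = cs2 := by
  have hc12 : ∀ (cs1 : List ℤ) (c1 c2 : ℤ) (cs2 : List ℤ),
      (∀ x ∈ cs1, 2 ≤ x) → (∀ x ∈ cs2, 2 ≤ x) →
      negCF (c1 :: cs1) = negCF (c2 :: cs2) → c1 = c2 := by
    intro cs1 c1 c2 cs2 h1 h2 heq
    obtain ⟨b1, b1', _⟩ := negCF_head_bounds c1 cs1 h1
    obtain ⟨b2, b2', _⟩ := negCF_head_bounds c2 cs2 h2
    rw [heq] at b1 b1'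
    have e1 : (c1:ℚ) - 1 < (c2:ℚ) := by linarith
    have e2 : (c2:ℚ) - 1 < (c1:ℚ) := by linarith
    have e1' : c1 - 1 < c2 := by exact_mod_cast (by push_cast; linarith : ((c1 - 1 : ℤ):ℚ) < (c2:ℚ))
    have e2' : c2 - 1 < c1 := by exact_mod_cast (by push_cast; linarith : ((c2 - 1 : ℤ):ℚ) < (c1:ℚ))
    omega
  intro cs1
  induction cs1 with
  | nil =>
      intro c1 c2 cs2 h1 h2 heq
      have hc := hc12 [] c1 c2 cs2 h1 h2 heq
      subst hc
      rcases cs2 with _ | ⟨d2, r2⟩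
      · exact ⟨rfl, rfl⟩
      · exfalso
        obtain ⟨_, _, hlt⟩ := negCF_head_bounds c1 (d2 :: r2) h2
        have : negCF [c1] = (c1:ℚ) := by simp [negCF]
        rw [this] at heq
        have := hlt (by simp)
        linarith [heq ▸ this]
  | cons d1 r1 ih =>
      intro c1 c2 cs2 h1 h2 heq
      have hc := hc12 (d1 :: r1) c1 c2 cs2 h1 h2 heq
      subst hc
      rcases cs2 with _ | ⟨d2, r2⟩
      · exfalso
        obtain ⟨_, _, hlt⟩ := negCF_head_bounds c1 (d1 :: r1) h1
        have h0 : negCF [c1] = (c1:ℚ) := by simp [negCF]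
        rw [h0] at heq
        have := hlt (by simp)
        linarith [heq ▸ this]
      · have ht1 : 1 < negCF (d1 :: r1) := negCF_gt_one _ h1 (by simp)
        have ht2 : 1 < negCF (d2 :: r2) := negCF_gt_one _ h2 (by simp)
        simp only [negCF] at heq
        have hinv : 1 / negCF (d1 :: r1) = 1 / negCF (d2 :: r2) := by linarith
        have hteq : negCF (d1 :: r1) = negCF (d2 :: r2) := by
          field_simp at hinv; linarith
        obtain ⟨hd, hr⟩ := ih d1 d2 r2
          (fun x hx => h1 x (by simp [hx])) (fun x hx => h2 x (by simp [hx])) hteq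
        exact ⟨rfl, by rw [hd, hr]⟩

end QSide
/-- Conversion of the tail of a regular CF into negative CF entries, with heads shifted by 2. -/
def convT : List ℤ → List ℤ
  | [] => []
  | [_] => []
  | a :: b :: rest => (a + 2) :: (List.replicate (b - 1).toNat 2 ++ convT rest)

/-- Conversion of a regular CF `a :: b :: rest` into its negative CF expansion. -/
def conv (a b : ℤ) (rest : List ℤ) : List ℤ :=
  (a + 1) :: (List.replicate (b - 1).toNat 2 ++ convT rest)

theorem negCF_replicate_two : ∀ n : ℕ,
    negCF (List.replicate (n + 1) 2) = ((n:ℚ) + 2) / ((n:ℚ) + 1)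
  | 0 => by norm_num [negCF, List.replicate]
  | n + 1 => by
      have ih := negCF_replicate_two n
      have h1 : (0:ℚ) < (n:ℚ) + 1 := by positivity
      have h2 : (0:ℚ) < (n:ℚ) + 2 := by positivity
      rw [List.replicate_succ]
      rw [show List.replicate (n+1) (2:ℤ) = 2 :: List.replicate n 2 from List.replicate_succ]
      simp only [negCF]
      rw [← List.replicate_succ, ih]
      push_cast
      have e1 : ((n:ℚ) + 1) ≠ 0 := by positivity
      have e2 : ((n:ℚ) + 2) ≠ 0 := by positivity
      field_simp
      ring
  
theorem negCF_replicate_append : ∀ (n : ℕ) (l : List ℤ), l ≠ [] → 1 < negCF l →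
    negCF (List.replicate n 2 ++ l) =
      (((n:ℚ) + 1) * negCF l - (n:ℚ)) / ((n:ℚ) * negCF l - ((n:ℚ) - 1))
  | 0, l, _, _ => by simp
  | n + 1, l, hne, hl => by
      have ih := negCF_replicate_append n l hne hl
      obtain ⟨d, r, hdr⟩ : ∃ d r, List.replicate n 2 ++ l = d :: r := by
        rcases h : List.replicate n 2 ++ l with _ | ⟨d, r⟩
        · exact absurd (List.append_eq_nil_iff.mp h).2 hne
        · exact ⟨d, r, rfl⟩
      have hden : (0:ℚ) < (n:ℚ) * negCF l - ((n:ℚ) - 1) := by nlinarith [Nat.cast_nonneg (α := ℚ) n]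
      have hnum : (0:ℚ) < ((n:ℚ) + 1) * negCF l - (n:ℚ) := by nlinarith [Nat.cast_nonneg (α := ℚ) n]
      rw [List.replicate_succ, List.cons_append, hdr]
      simp only [negCF]
      rw [← hdr, ih]
      push_cast
      have e1 : ((n:ℚ) + 1) * negCF l - (n:ℚ) ≠ 0 := ne_of_gt hnum
      have e2 : (n:ℚ) * negCF l - ((n:ℚ) - 1) ≠ 0 := ne_of_gt hden
      have e3 : ((n:ℚ) + 1) * negCF l - ((n:ℚ) + 1 - 1) ≠ 0 := by nlinarith
      field_simp
      ring
theorem negCF_cons_add_one (c : ℤ) (l : List ℤ) :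
    negCF ((c + 1) :: l) = negCF (c :: l) + 1 := by
  cases l with
  | nil => simp only [negCF]; push_cast; ring
  | cons d r => simp only [negCF]; push_cast; ring

theorem convT_mem : ∀ (l : List ℤ), (∀ x ∈ l, 1 ≤ x) → ∀ x ∈ convT l, 2 ≤ x
  | [], _, x, hx => by simp [convT] at hx
  | [_], _, x, hx => by simp [convT] at hx
  | a :: b :: rest, h, x, hx => by
      simp only [convT, List.mem_cons, List.mem_append, List.mem_replicate] at hx
      rcases hx with h1 | h2 | h3
      · have := h a (by simp); omega
      · omega
      · exact convT_mem rest (fun y hy => h y (by simp [hy])) x h3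

theorem regCF_eq_negCF_conv : ∀ (rest : List ℤ) (a b : ℤ), 1 ≤ b →
    (∀ x ∈ rest, 1 ≤ x) → rest.length % 2 = 0 →
    negCF (conv a b rest) = regCF (a :: b :: rest)
  | [], a, b, hb, _, _ => by
      rcases Nat.eq_zero_or_eq_succ_pred (b - 1).toNat with hn | hn
      · -- b = 1
        have hb1 : b = 1 := by omega
        subst hb1
        simp only [conv, convT, hn, List.replicate_zero, List.append_nil]
        simp only [negCF, regCF]
        push_cast; ring
      · have hb2 : 2 ≤ b := by omega
        set n := (b - 1).toNat - 1 with hdefn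
        have hrep : (b - 1).toNat = n + 1 := by omega
        have hnb : (n : ℚ) = (b : ℚ) - 2 := by
          have : (n : ℤ) = b - 2 := by omega
          exact_mod_cast congrArg (Int.cast : ℤ → ℚ) this
        simp only [conv, convT, List.append_nil, hrep]
        rw [List.replicate_succ]
        simp only [negCF]
        rw [← List.replicate_succ, negCF_replicate_two n]
        simp only [regCF]
        have hbq : (1:ℚ) ≤ (b:ℚ) := by exact_mod_cast hb
        rw [hnb]
        push_cast
        have e1 : (b:ℚ) ≠ 0 := by linarith
        have e2 : (b:ℚ) - 2 + 2 ≠ 0 := by linarith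
        have hb2q : (2:ℚ) ≤ (b:ℚ) := by exact_mod_cast hb2
        have e3 : (b:ℚ) - 2 + 1 ≠ 0 := by linarith
        field_simp
        ring
  | [x], _, _, _, _, hpar => by simp at hpar
  | a' :: b' :: rest', a, b, hb, hmem, hpar => by
      have hb' : 1 ≤ b' := hmem b' (by simp)
      have ih : negCF (conv a' b' rest') = regCF (a' :: b' :: rest') :=
        regCF_eq_negCF_conv rest' a' b' hb'
          (fun y hy => hmem y (by simp [hy])) (by simp at hpar ⊢; omega)
      set R := regCF (a' :: b' :: rest') with hRdef
      have hR : 0 < R := regCF_pos _ hmem (by simp)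
      have hu : negCF (convT (a' :: b' :: rest')) = R + 1 := by
        show negCF ((a' + 2) :: (List.replicate (b' - 1).toNat 2 ++ convT rest')) = R + 1
        have : a' + 2 = (a' + 1) + 1 := by ring
        rw [this, negCF_cons_add_one]
        rw [show ((a' + 1) :: (List.replicate (b' - 1).toNat 2 ++ convT rest'))
              = conv a' b' rest' from rfl, ih]
      have hconvne : convT (a' :: b' :: rest') ≠ [] := by simp [convT]
      have hugt : 1 < negCF (convT (a' :: b' :: rest')) := by rw [hu]; linarith
      set n := (b - 1).toNat with hot
      have hnq : (n : ℚ) = (b : ℚ) - 1 := by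
        have : (n : ℤ) = b - 1 := by omega
        exact_mod_cast congrArg (Int.cast : ℤ → ℚ) this
      obtain ⟨d, r, hdr⟩ : ∃ d r,
          List.replicate n 2 ++ convT (a' :: b' :: rest') = d :: r := by
        rcases h : List.replicate n 2 ++ convT (a' :: b' :: rest') with _ | ⟨d, r⟩
        · exact absurd (List.append_eq_nil_iff.mp h).2 hconvne
        · exact ⟨d, r, rfl⟩
      show negCF ((a + 1) :: (List.replicate n 2 ++ convT (a' :: b' :: rest')))
          = regCF (a :: b :: a' :: b' :: rest')
      rw [hdr]
      simp only [negCF]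
      rw [← hdr, negCF_replicate_append n _ hconvne hugt, hu]
      have hreg : regCF (a :: b :: a' :: b' :: rest') = (a:ℚ) + 1 / ((b:ℚ) + 1 / R) := by
        rw [hRdef]; simp only [regCF]
      rw [hreg]
      have hbq : (1:ℚ) ≤ (b:ℚ) := by exact_mod_cast hb
      rw [hnq]
      have e1 : R ≠ 0 := ne_of_gt hR
      have e2 : (0:ℚ) < b + 1 / R := by positivity
      have e3 : ((b:ℚ) - 1 + 1) * (R + 1) - ((b:ℚ) - 1) ≠ 0 := by nlinarith
      have e4 : ((b:ℚ) - 1) * (R + 1) - ((b:ℚ) - 1 - 1) ≠ 0 := by nlinarith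
      have e6 : (b:ℚ) * R + 1 ≠ 0 := by nlinarith
      have k1 : ((b:ℚ) - 1 + 1) * (R + 1) - ((b:ℚ) - 1) = (b:ℚ) * R + 1 := by ring
      have k2 : ((b:ℚ) - 1) * (R + 1) - ((b:ℚ) - 1 - 1) = ((b:ℚ) - 1) * R + 1 := by ring
      have k3 : (b:ℚ) + 1 / R = ((b:ℚ) * R + 1) / R := by field_simp
      rw [k1, k2, k3, one_div_div, one_div_div]
      push_cast
      field_simp
      ring
/-- The central scalar unit with value `q` times the identity. -/
def du : (Matrix (Fin 2) (Fin 2) K)ˣ where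
  val := !![q, 0; 0, q]
  inv := !![q⁻¹, 0; 0, q⁻¹]
  val_inv := by
    have hq : (q : K) ≠ 0 := RatFunc.X_ne_zero
    ext i j
    fin_cases i <;> fin_cases j <;>
      simp [Matrix.mul_apply, Fin.sum_univ_two, mul_inv_cancel₀ hq]
  inv_val := by
    have hq : (q : K) ≠ 0 := RatFunc.X_ne_zero
    ext i j
    fin_cases i <;> fin_cases j <;>
      simp [Matrix.mul_apply, Fin.sum_univ_two, inv_mul_cancel₀ hq]

lemma val_du : (↑du : Matrix (Fin 2) (Fin 2) K) = !![q, 0; 0, q] := rfl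
lemma val_du_inv : (↑(du⁻¹) : Matrix (Fin 2) (Fin 2) K) = !![q⁻¹, 0; 0, q⁻¹] := rfl
lemma val_s1 : (↑σ1 : Matrix (Fin 2) (Fin 2) K) = !![q⁻¹, -q⁻¹; 0, 1] := rfl
lemma val_s1i : (↑(σ1⁻¹) : Matrix (Fin 2) (Fin 2) K) = !![q, 1; 0, 1] := rfl
lemma val_s2 : (↑σ2 : Matrix (Fin 2) (Fin 2) K) = !![1, 0; 1, q⁻¹] := rfl
lemma val_Sq : (↑Sq : Matrix (Fin 2) (Fin 2) K) = !![0, -q⁻¹; 1, 0] := rfl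

lemma du_comm (M : (Matrix (Fin 2) (Fin 2) K)ˣ) : du * M = M * du := by
  apply Units.ext
  rw [Units.val_mul, Units.val_mul, val_du]
  ext i j
  fin_cases i <;> fin_cases j <;>
    simp [Matrix.mul_apply, Fin.sum_univ_two, mul_comm]

lemma du_zpow_comm (k : ℤ) (M : (Matrix (Fin 2) (Fin 2) K)ˣ) :
    du ^ k * M = M * du ^ k :=
  Commute.zpow_left (du_comm M) k

lemma e1 : σ2 * du = σ1⁻¹ * Sq * σ1⁻¹ := by
  have hq : (q : K) ≠ 0 := RatFunc.X_ne_zero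
  apply Units.ext
  rw [Units.val_mul, Units.val_mul, Units.val_mul, val_du, val_s1i, val_s2, val_Sq]
  ext i j
  fin_cases i <;> fin_cases j <;>
    simp [Matrix.mul_apply, Fin.sum_univ_two, mul_inv_cancel₀ hq, inv_mul_cancel₀ hq]

lemma e2 : σ2 * du * (σ1⁻¹ * Sq) = σ1⁻¹ * Sq * (σ1⁻¹ * σ1⁻¹ * Sq) := by
  have hq : (q : K) ≠ 0 := RatFunc.X_ne_zero
  apply Units.ext
  simp only [Units.val_mul, val_du, val_s1i, val_s2, val_Sq]
  ext i j
  fin_cases i <;> fin_cases j <;>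
    simp [Matrix.mul_apply, Fin.sum_univ_two, mul_inv_cancel₀ hq, inv_mul_cancel₀ hq]

lemma star : ∀ n : ℕ,
    (σ2 * du) ^ (n + 1) = σ1⁻¹ * Sq * (σ1⁻¹ * σ1⁻¹ * Sq) ^ n * σ1⁻¹
  | 0 => by simpa using e1
  | n + 1 => by
      have ih := star n
      calc (σ2 * du) ^ (n + 2) = (σ2 * du) * (σ2 * du) ^ (n + 1) := by
            rw [pow_succ']
        _ = (σ2 * du) * (σ1⁻¹ * Sq * (σ1⁻¹ * σ1⁻¹ * Sq) ^ n * σ1⁻¹) := by rw [ih]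
        _ = (σ2 * du * (σ1⁻¹ * Sq)) * ((σ1⁻¹ * σ1⁻¹ * Sq) ^ n * σ1⁻¹) := by
            simp only [mul_assoc]
        _ = (σ1⁻¹ * Sq * (σ1⁻¹ * σ1⁻¹ * Sq)) * ((σ1⁻¹ * σ1⁻¹ * Sq) ^ n * σ1⁻¹) := by
            rw [e2]
        _ = σ1⁻¹ * Sq * (σ1⁻¹ * σ1⁻¹ * Sq) ^ (n + 1) * σ1⁻¹ := by
            rw [pow_succ']; simp only [mul_assoc]

lemma prodCS_append : ∀ l1 l2 : List ℤ, prodCS (l1 ++ l2) = prodCS l1 * prodCS l2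
  | [], l2 => by simp [prodCS]
  | c :: r, l2 => by
      show (σ1 ^ (-c) * Sq) * prodCS (r ++ l2) = (σ1 ^ (-c) * Sq) * prodCS r * prodCS l2
      rw [prodCS_append r l2]; simp only [mul_assoc]

lemma prodCS_replicate : ∀ n : ℕ,
    prodCS (List.replicate n 2) = (σ1⁻¹ * σ1⁻¹ * Sq) ^ n
  | 0 => by simp [prodCS]
  | n + 1 => by
      have h2 : σ1 ^ (-2 : ℤ) = σ1⁻¹ * σ1⁻¹ := by group
      rw [List.replicate_succ]
      simp only [prodCS, prodCS_replicate n, h2, pow_succ']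
      try simp only [mul_assoc]

lemma lemC : ∀ l : List ℤ, (∀ x ∈ l.tail, 1 ≤ x) → l.length % 2 = 0 →
    σ1⁻¹ * prodReg l * du ^ evenSum l = prodCS (convT l) * σ1⁻¹
  | [], _, _ => by simp [prodReg, evenSum, convT, prodCS]
  | [x], _, hpar => by simp at hpar
  | a :: b :: rest, hmem, hpar => by
      have hb : 1 ≤ b := hmem b (by simp)
      have ih := lemC rest
        (fun x hx => hmem x (by simp [List.mem_of_mem_tail hx]))
        (by simp at hpar ⊢; omega)
      have ih' : σ1⁻¹ * (prodReg rest * du ^ evenSum rest)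
          = prodCS (convT rest) * σ1⁻¹ := by rw [← mul_assoc]; exact ih
      set n := (b - 1).toNat with hn
      have hbn : b = (n : ℤ) + 1 := by omega
      have hσ2b : σ2 ^ b * du ^ b = σ1⁻¹ * Sq * (σ1⁻¹ * σ1⁻¹ * Sq) ^ n * σ1⁻¹ := by
        rw [hbn, show ((n : ℤ) + 1) = ((n + 1 : ℕ) : ℤ) by push_cast; ring,
          zpow_natCast, zpow_natCast, ← Commute.mul_pow ((du_comm σ2).symm)]
        exact star n
      show σ1⁻¹ * (σ1 ^ (-a) * σ2 ^ b * prodReg rest) * du ^ (b + evenSum rest)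
          = prodCS ((a + 2) :: (List.replicate n 2 ++ convT rest)) * σ1⁻¹
      have hR : prodCS ((a + 2) :: (List.replicate n 2 ++ convT rest)) * σ1⁻¹
          = σ1 ^ (-(a + 2)) * (Sq * ((σ1⁻¹ * σ1⁻¹ * Sq) ^ n *
              (prodCS (convT rest) * σ1⁻¹))) := by
        simp only [prodCS, prodCS_append, prodCS_replicate]
        try simp only [mul_assoc]
      rw [hR]
      have step1 : σ1⁻¹ * (σ1 ^ (-a) * σ2 ^ b * prodReg rest) * du ^ (b + evenSum rest)
          = σ1⁻¹ * (σ1 ^ (-a) * ((σ2 ^ b * du ^ b) *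
              (prodReg rest * du ^ evenSum rest))) := by
        rw [zpow_add]
        simp only [mul_assoc]
        rw [← mul_assoc (prodReg rest), ← du_zpow_comm b (prodReg rest)]
        try simp only [mul_assoc]
      rw [step1, hσ2b]
      simp only [mul_assoc]
      rw [ih']
      have hgp : ∀ W : (Matrix (Fin 2) (Fin 2) K)ˣ,
          σ1⁻¹ * (σ1 ^ (-a) * (σ1⁻¹ * W)) = σ1 ^ (-(a + 2)) * W := by
        intro W
        have : σ1⁻¹ * σ1 ^ (-a) * σ1⁻¹ = σ1 ^ (-(a + 2)) := by group
        rw [← this]; simp only [mul_assoc]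
      rw [hgp]

lemma prodReg_eq_prodCS_conv (a b : ℤ) (rest : List ℤ) (_hb : 1 ≤ b)
    (hmem : ∀ x ∈ b :: rest, 1 ≤ x) (hpar : (a :: b :: rest).length % 2 = 0) :
    prodReg (a :: b :: rest) * du ^ evenSum (a :: b :: rest)
      = prodCS (conv a b rest) * σ1⁻¹ := by
  have h := lemC (a :: b :: rest) (by simpa using hmem) hpar
  calc prodReg (a :: b :: rest) * du ^ evenSum (a :: b :: rest)
      = σ1 * (σ1⁻¹ * prodReg (a :: b :: rest) * du ^ evenSum (a :: b :: rest)) := by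
        group
    _ = σ1 * (prodCS (convT (a :: b :: rest)) * σ1⁻¹) := by rw [h]
    _ = prodCS (conv a b rest) * σ1⁻¹ := by
        show σ1 * (prodCS ((a + 2) :: (List.replicate (b-1).toNat 2 ++ convT rest)) * σ1⁻¹)
          = prodCS ((a + 1) :: (List.replicate (b-1).toNat 2 ++ convT rest)) * σ1⁻¹
        simp only [prodCS]
        have : σ1 * σ1 ^ (-(a + 2)) = σ1 ^ (-(a + 1)) := by group
        simp only [← mul_assoc]
        rw [this]

lemma val_du_zpow (k : ℤ) :
    (↑(du ^ k) : Matrix (Fin 2) (Fin 2) K) = !![q ^ k, 0; 0, q ^ k] := by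
  have hq : (q : K) ≠ 0 := RatFunc.X_ne_zero
  induction k using Int.induction_on with
  | zero => simp [Matrix.one_fin_two]
  | succ n ih =>
      rw [zpow_add_one, Units.val_mul, ih, val_du]
      ext i j
      fin_cases i <;> fin_cases j <;>
        simp [Matrix.mul_apply, Fin.sum_univ_two, zpow_add_one₀ hq]
  | pred n ih =>
      rw [show (-(n : ℤ) - 1) = (-(n : ℤ)) - 1 from rfl, zpow_sub_one,
        Units.val_mul, ih, val_du_inv]
      ext i j
      fin_cases i <;> fin_cases j <;>
        simp [Matrix.mul_apply, Fin.sum_univ_two, zpow_sub_one₀ hq]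
lemma mobius_mul_fix (N A : Matrix (Fin 2) (Fin 2) K) (x c : K) (hc : c ≠ 0)
    (h0 : A 0 0 * x + A 0 1 = c * x) (h1 : A 1 0 * x + A 1 1 = c) :
    mobius (N * A) x = mobius N x := by
  unfold mobius
  have e0 : (N * A) 0 0 * x + (N * A) 0 1 = c * (N 0 0 * x + N 0 1) := by
    simp only [Matrix.mul_apply, Fin.sum_univ_two]
    linear_combination N 0 0 * h0 + N 0 1 * h1
  have e1 : (N * A) 1 0 * x + (N * A) 1 1 = c * (N 1 0 * x + N 1 1) := by
    simp only [Matrix.mul_apply, Fin.sum_univ_two]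
    linear_combination N 1 0 * h0 + N 1 1 * h1
  rw [e0, e1, mul_div_mul_left _ _ hc]

lemma one_sub_q_ne_zero : (1 : K) - q ≠ 0 := by
  rw [sub_ne_zero]
  intro h
  have h2 : algebraMap (Polynomial ℚ) K Polynomial.X = algebraMap (Polynomial ℚ) K 1 := by
    rw [RatFunc.algebraMap_X, map_one]; exact h.symm
  have h3 := IsFractionRing.injective (Polynomial ℚ) K h2
  exact Polynomial.X_ne_C 1 (h3.trans Polynomial.C_1.symm)

/-- if the regular and negative continued fraction values coincide,
then the Möbius actions of the two matrix products on 1/(1−q) agree. -/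
theorem mobius_prodReg_eq_mobius_prodCS (m : ℕ) (hm : 1 ≤ m) (a1 : ℤ) (as : List ℤ)
    (hlen : (a1 :: as).length = 2 * m)
    (ha1 : 0 ≤ a1) (has : ∀ x ∈ as, 1 ≤ x)
    (c1 : ℤ) (cs : List ℤ) (hc1 : 1 ≤ c1) (hcs : ∀ x ∈ cs, 2 ≤ x)
    (hval : regCF (a1 :: as) = negCF (c1 :: cs)) :
    mobius (prodReg (a1 :: as) : Matrix (Fin 2) (Fin 2) K) (1 / (1 - q))
      = mobius (prodCS (c1 :: cs) : Matrix (Fin 2) (Fin 2) K) (1 / (1 - q)) := by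
  have hq : (q : K) ≠ 0 := RatFunc.X_ne_zero
  obtain ⟨a2, rest, rfl⟩ : ∃ a2 rest, as = a2 :: rest := by
    rcases as with _ | ⟨a2, rest⟩
    · simp at hlen; omega
    · exact ⟨a2, rest, rfl⟩
  have hb : 1 ≤ a2 := has a2 (by simp)
  have hparrest : rest.length % 2 = 0 := by simp at hlen; omega
  have hpar : (a1 :: a2 :: rest).length % 2 = 0 := by simp at hlen ⊢; omega
  -- identify the negative CF expansion
  have hconvval : negCF (conv a1 a2 rest) = regCF (a1 :: a2 :: rest) :=
    regCF_eq_negCF_conv rest a1 a2 hb (fun x hx => has x (by simp [hx])) hparrest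
  have hT : ∀ x ∈ List.replicate (a2 - 1).toNat 2 ++ convT rest, 2 ≤ x := by
    intro x hx
    rcases List.mem_append.mp hx with h | h
    · have := List.eq_of_mem_replicate h; omega
    · exact convT_mem rest (fun y hy => has y (by simp [hy])) x h
  have heqn : negCF (c1 :: cs)
      = negCF ((a1 + 1) :: (List.replicate (a2 - 1).toNat 2 ++ convT rest)) := by
    rw [← hval, ← hconvval]; rfl
  obtain ⟨hc, hcs2⟩ := negCF_inj cs c1 (a1 + 1)
    (List.replicate (a2 - 1).toNat 2 ++ convT rest) hcs hT heqn
  have hlist : c1 :: cs = conv a1 a2 rest := by rw [hc, hcs2]; rfl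
  rw [hlist]
  -- the matrix identity
  have hmat := prodReg_eq_prodCS_conv a1 a2 rest hb
    (by simpa using has) hpar
  have hmat2 : prodCS (conv a1 a2 rest)
      = prodReg (a1 :: a2 :: rest) * du ^ evenSum (a1 :: a2 :: rest) * σ1 := by
    rw [hmat]; group
  have hval2 : (↑(prodCS (conv a1 a2 rest)) : Matrix (Fin 2) (Fin 2) K)
      = (↑(prodReg (a1 :: a2 :: rest)) : Matrix (Fin 2) (Fin 2) K)
        * (↑(du ^ evenSum (a1 :: a2 :: rest)) : Matrix (Fin 2) (Fin 2) K)
        * (↑σ1 : Matrix (Fin 2) (Fin 2) K) := by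
    rw [hmat2, Units.val_mul, Units.val_mul]
  rw [hval2]
  set x0 : K := 1 / (1 - q) with hx0
  have h1q : (1 : K) - q ≠ 0 := one_sub_q_ne_zero
  have hfix : q⁻¹ * x0 + -q⁻¹ = 1 * x0 := by
    rw [hx0]; field_simp; ring
  set es : ℤ := evenSum (a1 :: a2 :: rest) with hes
  rw [mobius_mul_fix _ _ x0 1 one_ne_zero
      (by rw [val_s1]; simpa using hfix)
      (by rw [val_s1]; simp)]
  rw [mobius_mul_fix _ _ x0 (q ^ es) (zpow_ne_zero es hq)
      (by rw [val_du_zpow]; simp)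
      (by rw [val_du_zpow]; simp)]
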